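/- Let η be the infinite sequence of rationals in [0,1] formed by concatenating, over the primes p = 2, 3, 5, 7, ... in increasing order, the blocks (1⁻¹ mod p)/p, (2⁻¹ mod p)/p, ..., ((p−1)⁻¹ mod p)/p. Let p_k denote the k-th prime and P(m) = Σ_{k=1}^m (p_k − 1). Then for every m ∈ ℕ, taking N = P(m), one has D_N*(η) ≥ 1/(2 p_m). -/
import Mathlib


open Filter Finset
open scoped BigOperators Classical

/-- `starCount ξ N r` = number of indices `n` with `1 ≤ n ≤ N` and `ξ n ∈ [0, r]`
(counted with multiplicity). -/
noncomputable def starCount (ξ : ℕ → ℝ) (N : ℕ) (r : ℝ) : ℕ :=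
  ((Finset.Icc 1 N).filter (fun n => ξ n ∈ Set.Icc (0 : ℝ) r)).card

/-- Star discrepancy of the first `N` terms of the sequence `ξ` (indexed from 1):
`D_N*(ξ) = sup_{0 < r ≤ 1} |A_N(ξ, r)/N − r|`. -/
noncomputable def starDisc (ξ : ℕ → ℝ) (N : ℕ) : ℝ :=
  sSup {d : ℝ | ∃ r : ℝ, 0 < r ∧ r ≤ 1 ∧ d = |(starCount ξ N r : ℝ) / (N : ℝ) - r|}

/-- The `m`-th prime number, 1-indexed: `nthPrime 1 = 2`, `nthPrime 2 = 3`, … -/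
noncomputable def nthPrime (m : ℕ) : ℕ := Nat.nth Nat.Prime (m - 1)

/-- `Psum m = ∑_{k=1}^m (p_k − 1)`, the number of terms in the first `m` blocks of `η`. -/
noncomputable def Psum (m : ℕ) : ℕ := ∑ k ∈ Finset.Icc 1 m, (nthPrime k - 1)

/-- `invMod j p` = the representative in `{0, …, p−1}` of `j⁻¹ (mod p)`. -/
noncomputable def invMod (j p : ℕ) : ℕ := ((j : ZMod p)⁻¹).val

/-- The sequence `η` (indexed from 1), obtained by concatenating over the primes
`p = 2, 3, 5, …` the blocks `(j⁻¹ mod p)/p` for `j = 1, …, p−1`.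
For `n ≥ 1`, if `m` is minimal with `n ≤ Psum (m+1)` (so `Psum m < n ≤ Psum (m+1)`),
then `η n` is the `(n − Psum m)`-th element of the block for the prime `nthPrime (m+1)`. -/
noncomputable def eta (n : ℕ) : ℝ :=
  if h : ∃ m, n ≤ Psum (m + 1) then
    (invMod (n - Psum (Nat.find h)) (nthPrime (Nat.find h + 1)) : ℝ) /
      (nthPrime (Nat.find h + 1) : ℝ)
  else 0

lemma nthPrime_prime (k : ℕ) : (nthPrime k).Prime := Nat.prime_nth_prime _

lemma nthPrime_mono {a b : ℕ} (h : a ≤ b) : nthPrime a ≤ nthPrime b :=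
  (Nat.nth_le_nth Nat.infinite_setOf_prime).2 (Nat.sub_le_sub_right h 1)

lemma Psum_mono : Monotone Psum := fun _ _ h =>
  Finset.sum_le_sum_of_subset (Finset.Icc_subset_Icc_right h)

lemma Psum_succ (k : ℕ) : Psum (k + 1) = Psum k + (nthPrime (k + 1) - 1) := by
  unfold Psum
  rw [Finset.sum_Icc_succ_top (Nat.succ_le_succ (Nat.zero_le k))]

lemma eta_ge (m n : ℕ) (h1 : 1 ≤ n) (h2 : n ≤ Psum m) :
    1 / (nthPrime m : ℝ) ≤ eta n := by
  have hex : ∃ M, n ≤ Psum (M + 1) := ⟨m, h2.trans (Psum_mono (Nat.le_succ m))⟩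
  set M := Nat.find hex with hM
  have hn2 : n ≤ Psum (M + 1) := Nat.find_spec hex
  have hlt : Psum M < n := by
    rcases Nat.eq_zero_or_pos M with h0 | hpos
    · rw [h0]
      have : Psum 0 = 0 := by simp [Psum]
      omega
    · have := Nat.find_min hex (m := M - 1) (by omega)
      have hM1 : M - 1 + 1 = M := by omega
      rw [hM1] at this
      omega
  have hMm : M + 1 ≤ m := by
    by_contra hc
    have : m ≤ M := by omega
    have := Psum_mono this
    omega
  set p := nthPrime (M + 1) with hpdef
  have hp : p.Prime := nthPrime_prime _
  have hple : p ≤ nthPrime m := nthPrime_mono hMm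
  set j := n - Psum M with hj
  have hj1 : 1 ≤ j := by omega
  have hjlt : j < p := by
    have := Psum_succ M
    have h2le : 2 ≤ p := hp.two_le
    omega
  haveI : Fact p.Prime := ⟨hp⟩
  have hjz : (j : ZMod p) ≠ 0 := by
    rw [Ne, ZMod.natCast_eq_zero_iff]
    intro hdvd
    exact absurd (Nat.le_of_dvd (by omega) hdvd) (by omega)
  have hinv : 1 ≤ invMod j p := by
    rw [Nat.one_le_iff_ne_zero]
    unfold invMod
    rw [Ne, ZMod.val_eq_zero]
    exact inv_ne_zero hjz
  rw [eta, dif_pos hex]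
  have hppos : (0 : ℝ) < p := by exact_mod_cast hp.pos
  have hpmpos : (0 : ℝ) < nthPrime m := by exact_mod_cast (nthPrime_prime m).pos
  have h1le : (1 : ℝ) ≤ invMod j p := by exact_mod_cast hinv
  calc 1 / (nthPrime m : ℝ) ≤ 1 / (p : ℝ) := by
        apply one_div_le_one_div_of_le hppos
        exact_mod_cast hple
    _ ≤ (invMod j p : ℝ) / (p : ℝ) := by gcongr
    _ = _ := rfl

/-- For every `m ≥ 1`, taking `N = P(m)`, one has
`D_N*(η) ≥ 1/(2 p_m)`. -/
theorem eta_starDisc_lower (m : ℕ) (hm : 1 ≤ m) :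
    1 / (2 * (nthPrime m : ℝ)) ≤ starDisc eta (Psum m) := by
  have hp := nthPrime_prime m
  have hp2 : (2 : ℝ) ≤ nthPrime m := by exact_mod_cast hp.two_le
  have hppos : (0 : ℝ) < nthPrime m := by linarith
  set r : ℝ := 1 / (2 * (nthPrime m : ℝ)) with hr
  have hr0 : 0 < r := by positivity
  have hr1 : r ≤ 1 := by
    rw [hr, div_le_one (by linarith)]
    linarith
  have hcount : starCount eta (Psum m) r = 0 := by
    unfold starCount
    rw [Finset.card_eq_zero, Finset.filter_eq_empty_iff]
    intro n hn
    simp only [Finset.mem_Icc] at hn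
    intro hmem
    have hge := eta_ge m n hn.1 hn.2
    have hlt : r < 1 / (nthPrime m : ℝ) := by
      rw [hr]
      apply div_lt_div_of_pos_left one_pos hppos
      linarith
    have := hmem.2
    linarith
  have hbdd : BddAbove {d : ℝ | ∃ r' : ℝ, 0 < r' ∧ r' ≤ 1 ∧
      d = |(starCount eta (Psum m) r' : ℝ) / (Psum m : ℝ) - r'|} := by
    refine ⟨1, ?_⟩
    rintro d ⟨r', hr'0, hr'1, rfl⟩
    have hA : starCount eta (Psum m) r' ≤ Psum m := by
      refine le_trans (Finset.card_filter_le _ _) ?_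
      simp [Nat.card_Icc]
    have hx0 : (0 : ℝ) ≤ (starCount eta (Psum m) r' : ℝ) / (Psum m : ℝ) := by
      positivity
    have hx1 : (starCount eta (Psum m) r' : ℝ) / (Psum m : ℝ) ≤ 1 := by
      rcases Nat.eq_zero_or_pos (Psum m) with h0 | hpos
      · have : starCount eta (Psum m) r' = 0 := by omega
        simp [this]
      · rw [div_le_one (by exact_mod_cast hpos)]
        exact_mod_cast hA
    rw [abs_le]
    constructor <;> linarith
  have hmem : r ∈ {d : ℝ | ∃ r' : ℝ, 0 < r' ∧ r' ≤ 1 ∧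
      d = |(starCount eta (Psum m) r' : ℝ) / (Psum m : ℝ) - r'|} := by
    refine ⟨r, hr0, hr1, ?_⟩
    rw [hcount]
    simp [abs_of_nonneg hr0.le]
  exact le_csSup hbdd hmem
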